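/- Let L(z) = M_T(z/2)·M_V(z)·M_T(z/2) be the leapfrog matrix for the harmonic oscillator, let α₁ = 1/4 + (i/4)·√(5/3), α₂ = 1/2, and let R(h) be the entrywise real part of L(conj(α₁) h)·L(α₂ h)·L(α₁ h). Then (fun h : ℝ => det R(h) − 1) is O(h¹²) as h → 0; that is, the real projection of this fourth-order symmetric-conjugate composition is pseudo-symplectic of order 11 for the harmonic oscillator. -/

import Mathlib

open Matrix Asymptotics Filter

attribute [local instance] Matrix.normedAddCommGroup Matrix.normedSpace

/-- Exact evolution matrix of the harmonic oscillator `q' = p`, `p' = -q`. -/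
noncomputable def MH (z : ℂ) : Matrix (Fin 2) (Fin 2) ℂ :=
  !![Complex.cos z, Complex.sin z; -Complex.sin z, Complex.cos z]

/-- Exact evolution matrix of the kinetic part. -/
def MT (z : ℂ) : Matrix (Fin 2) (Fin 2) ℂ := !![1, z; 0, 1]

/-- Exact evolution matrix of the potential part. -/
def MV (z : ℂ) : Matrix (Fin 2) (Fin 2) ℂ := !![1, 0; -z, 1]

/-- The leapfrog/Strang splitting matrix. -/
noncomputable def L (z : ℂ) : Matrix (Fin 2) (Fin 2) ℂ := MT (z / 2) * MV z * MT (z / 2)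

/-- The coefficient `α₁ = 1/4 + (i/4) √(5/3)`. -/
noncomputable def α₁ : ℂ := 1 / 4 + Complex.I / 4 * (Real.sqrt (5 / 3) : ℝ)

/-- The coefficient `α₂ = 1/2`. -/
noncomputable def α₂ : ℂ := 1 / 2

/-- The three-stage symmetric-conjugate composition `S_{ᾱ₁h} ∘ S_{α₂h} ∘ S_{α₁h}`. -/
noncomputable def Ψ₃ (h : ℝ) : Matrix (Fin 2) (Fin 2) ℂ :=
  L (starRingEnd ℂ α₁ * (h : ℂ)) * L (α₂ * (h : ℂ)) * L (α₁ * (h : ℂ))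

/-- The real projection of `Ψ₃`. -/
noncomputable def Rproj (h : ℝ) : Matrix (Fin 2) (Fin 2) ℝ := (Ψ₃ h).map Complex.re

/-!
Each leapfrog matrix has determinant one, hence so does the complex composition `Ψ₃ h`. For a
`2 × 2` complex matrix `A + iB` with `A`, `B` real, `Re det (A + iB) = det A - det B`, so
`det (Rproj h) - 1 = det (Im Ψ₃ h)`. Since `conj α₁ = 1/2 - α₁` and `α₁² = α₁/2 - 1/6`, every entry
of `Ψ₃ h` reduces to a polynomial in `h` that is affine in `α₁`; its imaginary part is
`diag(c, -c)` with `c = √(5/3) h⁶ / 576`, and `det (Rproj h) - 1 = -c² = -5 h¹² / 995328`.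
-/

lemma det_MT (z : ℂ) : (MT z).det = 1 := by simp [MT, det_fin_two]

lemma det_MV (z : ℂ) : (MV z).det = 1 := by simp [MV, det_fin_two]

lemma det_L (z : ℂ) : (L z).det = 1 := by simp [L, det_mul, det_MT, det_MV]

lemma L_eq (z : ℂ) : L z = !![1 - z ^ 2 / 2, z - z ^ 3 / 4; -z, 1 - z ^ 2 / 2] := by
  ext i j
  fin_cases i <;> fin_cases j <;> simp [L, MT, MV, mul_apply, Fin.sum_univ_two] <;> ring

lemma det_map_re_fin_two (M : Matrix (Fin 2) (Fin 2) ℂ) :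
    (M.map Complex.re).det = M.det.re + (M.map Complex.im).det := by
  simp only [det_fin_two, map_apply, Complex.sub_re, Complex.mul_re]
  ring

lemma α₁_re : α₁.re = 1 / 4 := by simp [α₁]

lemma α₁_im : α₁.im = √(5 / 3) / 4 := by
  simp only [α₁, Complex.add_im, Complex.mul_im, Complex.ofReal_re, Complex.ofReal_im]
  norm_num
  ring

lemma conj_α₁ : starRingEnd ℂ α₁ = 1 / 2 - α₁ :=
  Complex.ext (by simp [α₁_re]; norm_num) (by simp [α₁_im])

lemma α₁_sq : α₁ ^ 2 = α₁ / 2 - 1 / 6 := by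
  have hs : ((√(5 / 3) : ℝ) : ℂ) ^ 2 = 5 / 3 := by
    rw [← Complex.ofReal_pow, Real.sq_sqrt (by norm_num)]
    push_cast
    ring
  simp only [α₁]
  linear_combination (Complex.I / 4) ^ 2 * hs + 5 / 48 * Complex.I_sq

lemma det_Ψ₃ (h : ℝ) : (Ψ₃ h).det = 1 := by simp [Ψ₃, det_mul, det_L]

lemma Ψ₃_eq (h : ℝ) : Ψ₃ h =
    !![1 - (h : ℂ) ^ 2 / 2 + (h : ℂ) ^ 4 / 24 - (h : ℂ) ^ 6 / 576 + (α₁ - 1 / 4) * (h : ℂ) ^ 6 / 144,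
        h - (h : ℂ) ^ 3 / 6 + (h : ℂ) ^ 5 / 288 - (h : ℂ) ^ 7 / 1728;
      -h + (h : ℂ) ^ 3 / 6 - (h : ℂ) ^ 5 / 72,
        1 - (h : ℂ) ^ 2 / 2 + (h : ℂ) ^ 4 / 24 - (h : ℂ) ^ 6 / 576 - (α₁ - 1 / 4) * (h : ℂ) ^ 6 / 144] := by
  have := α₁_sq
  ext i j
  fin_cases i <;> fin_cases j <;>
    simp [Ψ₃, L_eq, conj_α₁, α₂, mul_apply, Fin.sum_univ_two] <;> grind

lemma map_im_Ψ₃ (h : ℝ) :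
    (Ψ₃ h).map Complex.im = !![√(5 / 3) * h ^ 6 / 576, 0; 0, -(√(5 / 3) * h ^ 6 / 576)] := by
  ext i j
  fin_cases i <;> fin_cases j <;> simp [Ψ₃_eq, α₁_im, ← Complex.ofReal_pow, -Real.sqrt_div'] <;> ring

lemma det_Rproj_sub_one (h : ℝ) : (Rproj h).det - 1 = -(5 / 995328) * h ^ 12 := by
  rw [Rproj, det_map_re_fin_two, det_Ψ₃, map_im_Ψ₃, det_fin_two_of, Complex.one_re]
  have hs : √(5 / 3) ^ 2 = 5 / 3 := Real.sq_sqrt (by norm_num)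
  linear_combination (-(h ^ 12) / 331776) * hs

/-- the real projection of the fourth-order symmetric-conjugate
composition `S_{ᾱ₁h} ∘ S_{α₂h} ∘ S_{α₁h}` is pseudo-symplectic of order 11 for
the harmonic oscillator. -/
theorem projected_three_stage_composition_pseudo_symplectic_order_eleven :
    (fun h : ℝ => (Rproj h).det - 1) =O[nhds 0] fun h : ℝ => h ^ 12 := by
  simp only [det_Rproj_sub_one]
  exact (isBigO_refl _ _).const_mul_left _
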